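/- Let n ≥ 1 and let a, a′, b, b′ be Hermitian n×n complex matrices with a² = a′² = b² = b′² = 1 (the identity matrix), such that each of a, a′ commutes with each of b, b′. Let W be a positive semidefinite n×n complex matrix with trace 1. If additionally a and a′ commute with each other (or b and b′ commute with each other), then |Tr(W(ab + ab′ + a′b − a′b′))| ≤ 2. -/

import Mathlib

open Matrix ComplexOrder

/-!
For involutions `a, a', b, b'` with each of `a, a'` commuting with each of `b, b'`, the CHSH
operator `C = ab + ab' + a'b - a'b'` satisfies Landau's identity `C² = 4 - [a, a'][b, b']`, so
`C² = 4` as soon as one of the commutators vanishes. For a Hermitian involution `X`,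
`(1 - X)ᴴ (1 - X) = 2 (1 - X)`, so `1 ± X` is positive semidefinite; pairing with a density
matrix `W` gives `-1 ≤ Tr(WX) ≤ 1`, and `X = C / 2` is a Hermitian involution.
-/

def chshOperator {R : Type*} [Ring R] (a a' b b' : R) : R :=
  a * b + a * b' + a' * b - a' * b'

section Ring

variable {R : Type*} [Ring R] {a a' b b' : R}

theorem chshOperator_mul_self (ha : a * a = 1) (ha' : a' * a' = 1) (hb : b * b = 1)
    (hb' : b' * b' = 1) (hab : Commute a b) (hab' : Commute a b') (ha'b : Commute a' b)
    (ha'b' : Commute a' b') :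
    chshOperator a a' b b' * chshOperator a a' b b' =
      4 - (a * a' - a' * a) * (b * b' - b' * b) := by
  set u := b + b' with hu
  set v := b - b' with hv
  have hau : Commute a u := hab.add_right hab'
  have ha'v : Commute a' v := ha'b.sub_right ha'b'
  have hsq : u * u + v * v = 4 := by
    have : u * u + v * v = 2 * (b * b) + 2 * (b' * b') := by rw [hu, hv]; noncomm_ring
    rw [this, hb, hb']
    norm_num
  have huv : u * v = -(b * b' - b' * b) := by
    have : u * v = b * b - b' * b' - (b * b' - b' * b) := by rw [hu, hv]; noncomm_ring
    rw [this, hb, hb', sub_self, zero_sub]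
  have hvu : v * u = b * b' - b' * b := by
    have : v * u = b * b - b' * b' + (b * b' - b' * b) := by rw [hu, hv]; noncomm_ring
    rw [this, hb, hb', sub_self, zero_add]
  calc chshOperator a a' b b' * chshOperator a a' b b'
      = a * u * (a * u) + a * u * (a' * v) + a' * v * (a * u) + a' * v * (a' * v) := by
        rw [chshOperator, hu, hv]; noncomm_ring
    _ = a * a * (u * u) + a * a' * (u * v) + a' * a * (v * u) + a' * a' * (v * v) := by
        rw [hau.symm.mul_mul_mul_comm, (ha'b.add_right ha'b').symm.mul_mul_mul_comm,
          (hab.sub_right hab').symm.mul_mul_mul_comm, ha'v.symm.mul_mul_mul_comm]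
    _ = 4 - (a * a' - a' * a) * (b * b' - b' * b) := by
        rw [ha, ha', huv, hvu, ← hsq]
        noncomm_ring

theorem chshOperator_mul_self_of_commute (ha : a * a = 1) (ha' : a' * a' = 1) (hb : b * b = 1)
    (hb' : b' * b' = 1) (hab : Commute a b) (hab' : Commute a b') (ha'b : Commute a' b)
    (ha'b' : Commute a' b') (hcomm : Commute a a' ∨ Commute b b') :
    chshOperator a a' b b' * chshOperator a a' b b' = 4 := by
  rw [chshOperator_mul_self ha ha' hb hb' hab hab' ha'b ha'b']
  rcases hcomm with h | h
  · rw [h.eq, sub_self, zero_mul, sub_zero]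
  · rw [h.eq, sub_self, mul_zero, sub_zero]

theorem IsSelfAdjoint.chshOperator [StarRing R] (ha : IsSelfAdjoint a) (ha' : IsSelfAdjoint a')
    (hb : IsSelfAdjoint b) (hb' : IsSelfAdjoint b') (hab : Commute a b) (hab' : Commute a b')
    (ha'b : Commute a' b) (ha'b' : Commute a' b') : IsSelfAdjoint (chshOperator a a' b b') :=
  ((((ha.commute_iff hb).mp hab).add ((ha.commute_iff hb').mp hab')).add
    ((ha'.commute_iff hb).mp ha'b)).sub ((ha'.commute_iff hb').mp ha'b')

end Ring

theorem RCLike.norm_le_one_of_le_one_of_neg_le_one {𝕜 : Type*} [RCLike 𝕜] {t : 𝕜}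
    (h₁ : t ≤ 1) (h₂ : -t ≤ 1) : ‖t‖ ≤ 1 := by
  rw [RCLike.le_iff_re_im] at h₁ h₂
  simp only [RCLike.one_re, RCLike.one_im, map_neg] at h₁ h₂
  rw [← RCLike.re_add_im t, h₁.2, RCLike.ofReal_zero, zero_mul, add_zero, RCLike.norm_ofReal,
    abs_le]
  constructor <;> linarith [h₂.1]

namespace Matrix

variable {𝕜 n : Type*} [RCLike 𝕜] [Fintype n]

open scoped MatrixOrder in
theorem PosSemidef.trace_mul_nonneg {A B : Matrix n n 𝕜} (hA : A.PosSemidef)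
    (hB : B.PosSemidef) : 0 ≤ (A * B).trace := by
  classical
  obtain ⟨S, rfl⟩ := CStarAlgebra.nonneg_iff_eq_star_mul_self.mp hA.nonneg
  rw [star_eq_conjTranspose, mul_assoc, trace_mul_comm]
  exact (hB.mul_mul_conjTranspose_same S).trace_nonneg

theorem IsHermitian.posSemidef_one_sub_of_mul_self_eq_one [DecidableEq n] {X : Matrix n n 𝕜}
    (hX : X.IsHermitian) (hX2 : X * X = 1) : (1 - X).PosSemidef := by
  have hsq : (1 - X)ᴴ * (1 - X) = (2 : 𝕜) • (1 - X) := by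
    rw [(isHermitian_one.sub hX).eq, two_smul]
    noncomm_ring [hX2]
  have hdecomp : 1 - X = (2⁻¹ : 𝕜) • ((1 - X)ᴴ * (1 - X)) := by
    rw [hsq, smul_smul, inv_mul_cancel₀ two_ne_zero, one_smul]
  rw [hdecomp]
  exact (posSemidef_conjTranspose_mul_self _).smul (inv_nonneg.mpr zero_le_two)

theorem IsHermitian.trace_mul_le_one_of_mul_self_eq_one [DecidableEq n] {W X : Matrix n n 𝕜}
    (hW : W.PosSemidef) (hWtr : W.trace = 1) (hX : X.IsHermitian) (hX2 : X * X = 1) :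
    (W * X).trace ≤ 1 := by
  have hnonneg := hW.trace_mul_nonneg (hX.posSemidef_one_sub_of_mul_self_eq_one hX2)
  rwa [mul_sub, mul_one, trace_sub, hWtr, sub_nonneg] at hnonneg

theorem IsHermitian.norm_trace_mul_le_one_of_mul_self_eq_one [DecidableEq n] {W X : Matrix n n 𝕜}
    (hW : W.PosSemidef) (hWtr : W.trace = 1) (hX : X.IsHermitian) (hX2 : X * X = 1) :
    ‖(W * X).trace‖ ≤ 1 := by
  refine RCLike.norm_le_one_of_le_one_of_neg_le_one
    (hX.trace_mul_le_one_of_mul_self_eq_one hW hWtr hX2) ?_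
  rw [← trace_neg, ← mul_neg]
  exact hX.neg.trace_mul_le_one_of_mul_self_eq_one hW hWtr (by rw [neg_mul_neg, hX2])

theorem IsHermitian.norm_trace_mul_le_of_mul_self_eq [DecidableEq n] {W C : Matrix n n 𝕜}
    (hW : W.PosSemidef) (hWtr : W.trace = 1) (hC : C.IsHermitian) {r : ℝ} (hr : 0 < r)
    (hC2 : C * C = (r ^ 2) • 1) : ‖(W * C).trace‖ ≤ r := by
  have hX2 : r⁻¹ • C * r⁻¹ • C = 1 := by
    rw [smul_mul_smul_comm, hC2, smul_smul, show r⁻¹ * r⁻¹ * r ^ 2 = 1 by field_simp, one_smul]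
  have hX := (hC.smul (.all r⁻¹)).norm_trace_mul_le_one_of_mul_self_eq_one hW hWtr hX2
  rwa [mul_smul_comm, trace_smul, norm_smul, Real.norm_of_nonneg (inv_nonneg.mpr hr.le),
    inv_mul_le_iff₀ hr, mul_one] at hX

end Matrix

theorem classical_bound_of_commuting
    (n : ℕ)
    (a a' b b' W : Matrix (Fin n) (Fin n) ℂ)
    (ha : a.IsHermitian) (ha' : a'.IsHermitian)
    (hb : b.IsHermitian) (hb' : b'.IsHermitian)
    (ha2 : a * a = 1) (ha'2 : a' * a' = 1)
    (hb2 : b * b = 1) (hb'2 : b' * b' = 1)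
    (hab : Commute a b) (hab' : Commute a b')
    (ha'b : Commute a' b) (ha'b' : Commute a' b')
    (hW : W.PosSemidef) (hWtr : W.trace = 1)
    (hcomm : Commute a a' ∨ Commute b b') :
    ‖(W * (a * b + a * b' + a' * b - a' * b')).trace‖ ≤ 2 := by
  have hC : (chshOperator a a' b b').IsHermitian :=
    ha.isSelfAdjoint.chshOperator ha' hb hb' hab hab' ha'b ha'b'
  have hC2 : chshOperator a a' b b' * chshOperator a a' b b' = ((2 : ℝ) ^ 2) • 1 := by
    rw [chshOperator_mul_self_of_commute ha2 ha'2 hb2 hb'2 hab hab' ha'b ha'b' hcomm]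
    norm_num [ofNat_smul_eq_nsmul]
  exact hC.norm_trace_mul_le_of_mul_self_eq hW hWtr two_pos hC2
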